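/- Let X be a complex Banach space, T a bounded linear operator on X, λ ∈ ℂ, and p a positive integer. Assume (T − λI)^p has closed range and 0 < dim ker((T − λI)^p) = n ≤ m = dim ker((T* − λI)^p) < ∞ (i.e., T − λI is Fredholm of index ≤ 0). Then the m×n Gram matrix G with entries G_{ji} = e*_j(e_i), built from a basis (e_1,…,e_n) of ker((T − λI)^p) and a basis (e*_1,…,e*_m) of ker((T* − λI)^p), is a square invertible matrix if and only if T − λI is a Browder operator with ascent at most p, i.e., in addition n = m, ker((T − λI)^p) = ker((T − λI)^{p+1}) and range((T − λI)^p) = range((T − λI)^{p+1}). -/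

import Mathlib

/-!
Write `S = (T - λ)^p`, `N = ker S` and `R = range S`. The kernel of `(T* - λ)^p = S*` is the
annihilator `R^⊥`, so `G` is the matrix of the evaluation pairing `R^⊥ × N → ℂ`. Since `R` is
closed, Hahn–Banach shows that a vector killed by all of `R^⊥` lies in `R`; hence the columns of
`G` are independent iff `N ∩ R = 0`. Since `N + R` is closed too (`N` is finite-dimensional),
independence of the rows (no nonzero functional of `R^⊥` vanishes on `N`) forces `N + R = X`.
For square `G` the two independences coincide with full rank, and for `p ≥ 1` we have
`N ∩ R = 0 ↔ ker S = ker (T - λ)^(p+1)` and `N + R = X → R = range (T - λ)^(p+1)`.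
-/

/-- The dual (transpose) operator `T* : X* → X*`, `T* f = f ∘ T`, of a bounded operator `T`
on a normed space `X`. -/
noncomputable def dualOp {X : Type*} [NormedAddCommGroup X] [NormedSpace ℂ X]
    (T : X →L[ℂ] X) : StrongDual ℂ X →L[ℂ] StrongDual ℂ X :=
  (ContinuousLinearMap.compL ℂ X X ℂ).flip T

namespace Module.End

variable {K V : Type*} [DivisionRing K] [AddCommGroup V] [Module K V] (f : End K V) {p : ℕ}

theorem pow_apply_pow_apply_of_add_eq {a b c d : ℕ} (h : a + b = c + d) (x : V) :
    (f ^ a) ((f ^ b) x) = (f ^ c) ((f ^ d) x) := by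
  rw [← mul_apply, ← mul_apply, ← pow_add, ← pow_add, h]

theorem disjoint_ker_pow_range_pow_iff (hp : 0 < p) :
    Disjoint (LinearMap.ker (f ^ p)) (LinearMap.range (f ^ p)) ↔
      LinearMap.ker (f ^ p) = LinearMap.ker (f ^ (p + 1)) := by
  constructor
  · intro h
    refine le_antisymm (by rw [pow_succ', mul_eq_comp]; exact LinearMap.ker_le_ker_comp _ _) ?_
    intro x hx
    refine Submodule.disjoint_def.mp h _ ?_ ⟨x, rfl⟩
    rw [LinearMap.mem_ker, f.pow_apply_pow_apply_of_add_eq (by omega : p + p = (p - 1) + (p + 1)),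
      LinearMap.mem_ker.mp hx, map_zero]
  · intro h
    refine Submodule.disjoint_def.mpr ?_
    rintro _ hy ⟨w, rfl⟩
    have hw : w ∈ LinearMap.ker (f ^ (p + p)) := by
      rwa [LinearMap.mem_ker, pow_add, mul_apply]
    rwa [← ker_pow_constant h p] at hw

theorem range_pow_eq_range_pow_succ_of_codisjoint (hp : 0 < p)
    (h : Codisjoint (LinearMap.ker (f ^ p)) (LinearMap.range (f ^ p))) :
    LinearMap.range (f ^ p) = LinearMap.range (f ^ (p + 1)) := by
  refine le_antisymm ?_ (by rw [pow_succ, mul_eq_comp]; exact LinearMap.range_comp_le_range _ _)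
  rintro _ ⟨x, rfl⟩
  obtain ⟨u, hu, _, ⟨w, rfl⟩, rfl⟩ := Submodule.mem_sup.mp (h.eq_top ▸ Submodule.mem_top (x := x))
  refine ⟨(f ^ (p - 1)) w, ?_⟩
  rw [map_add, LinearMap.mem_ker.mp hu, zero_add]
  exact f.pow_apply_pow_apply_of_add_eq (by omega) w

end Module.End

theorem Matrix.rank_eq_card_iff_separatingRight {K m n : Type*} [Field K] [Fintype m] [Fintype n]
    (A : Matrix m n K) : A.rank = Fintype.card n ↔ A.SeparatingRight := by
  have := LinearMap.finrank_range_add_finrank_ker A.mulVecLin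
  rw [Module.finrank_fintype_fun_eq_card] at this
  rw [separatingRight_iff_forall_mulVec_eq_zero, ← Matrix.ker_mulVecLin_eq_bot_iff,
    ← Submodule.finrank_eq_zero, Matrix.rank]
  omega

section
variable {𝕜 E : Type*} [RCLike 𝕜] [NormedAddCommGroup E] [NormedSpace 𝕜 E]

theorem Submodule.mem_of_forall_dual_eq_zero {M : Submodule 𝕜 E} (hM : IsClosed (M : Set E))
    {x : E} (h : ∀ f : StrongDual 𝕜 E, (∀ y ∈ M, f y = 0) → f x = 0) : x ∈ M := by
  rw [← Submodule.Quotient.mk_eq_zero]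
  refine SeparatingDual.eq_zero_of_forall_dual_eq_zero fun g => h (g.comp M.mkQL) fun y hy => ?_
  simp [(Submodule.Quotient.mk_eq_zero M).mpr hy]

variable {K : Submodule 𝕜 (StrongDual 𝕜 E)} {M N : Submodule 𝕜 E}

theorem separatingRight_topDualPairing_domRestrict₁₂_iff (hM : IsClosed (M : Set E))
    (hK : ∀ f, f ∈ K ↔ ∀ y ∈ M, f y = 0) :
    ((topDualPairing 𝕜 E).domRestrict₁₂ K N).SeparatingRight ↔ Disjoint N M := by
  rw [Submodule.disjoint_def]
  constructor
  · intro h x hxN hxM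
    exact congrArg Subtype.val (h ⟨x, hxN⟩ fun f => (hK f).mp f.2 x hxM)
  · intro h x hx
    exact Subtype.ext (h x x.2 (M.mem_of_forall_dual_eq_zero hM fun f hf => hx ⟨f, (hK f).mpr hf⟩))

theorem codisjoint_of_separatingLeft_topDualPairing_domRestrict₁₂ [FiniteDimensional 𝕜 N]
    (hM : IsClosed (M : Set E)) (hK : ∀ f, f ∈ K ↔ ∀ y ∈ M, f y = 0)
    (h : ((topDualPairing 𝕜 E).domRestrict₁₂ K N).SeparatingLeft) : Codisjoint N M := by
  rw [codisjoint_iff, sup_comm, eq_top_iff]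
  intro x _
  refine (M ⊔ N).mem_of_forall_dual_eq_zero (M.isClosed_sup_finiteDimensional N hM) fun f hf => ?_
  have hf0 : (⟨f, (hK f).mpr fun y hy => hf y (Submodule.mem_sup_left hy)⟩ : K) = 0 :=
    h _ fun y => hf y (Submodule.mem_sup_right y.2)
  rw [show f = 0 from congrArg Subtype.val hf0, zero_apply]

variable {ι κ : Type*} [Fintype ι] [Fintype κ] [DecidableEq ι] [DecidableEq κ]

theorem rank_toMatrix₂_topDualPairing_eq_card_iff_disjoint (hM : IsClosed (M : Set E))
    (hK : ∀ f, f ∈ K ↔ ∀ y ∈ M, f y = 0) (b : Module.Basis ι 𝕜 K) (c : Module.Basis κ 𝕜 N) :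
    (LinearMap.toMatrix₂ b c ((topDualPairing 𝕜 E).domRestrict₁₂ K N)).rank = Fintype.card κ ↔
      Disjoint N M := by
  rw [Matrix.rank_eq_card_iff_separatingRight, LinearMap.separatingRight_toMatrix₂_iff,
    separatingRight_topDualPairing_domRestrict₁₂_iff hM hK]

theorem codisjoint_of_rank_toMatrix₂_topDualPairing_eq_card (hM : IsClosed (M : Set E))
    (hK : ∀ f, f ∈ K ↔ ∀ y ∈ M, f y = 0) (b : Module.Basis κ 𝕜 K) (c : Module.Basis κ 𝕜 N)
    (h : (LinearMap.toMatrix₂ b c ((topDualPairing 𝕜 E).domRestrict₁₂ K N)).rank =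
      Fintype.card κ) :
    Codisjoint N M := by
  have : FiniteDimensional 𝕜 N := .of_basis c
  refine codisjoint_of_separatingLeft_topDualPairing_domRestrict₁₂ hM hK
    ((LinearMap.separatingLeft_toMatrix₂_iff b c).1 ?_)
  rwa [Matrix.separatingLeft_iff_det_ne_zero, ← Matrix.separatingRight_iff_det_ne_zero,
    ← Matrix.rank_eq_card_iff_separatingRight]

end

section
variable {X : Type*} [NormedAddCommGroup X] [NormedSpace ℂ X]

theorem dualOp_apply (T : X →L[ℂ] X) (f : StrongDual ℂ X) : dualOp T f = f.comp T := rfl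

theorem dualOp_mul (A B : X →L[ℂ] X) : dualOp (A * B) = dualOp B * dualOp A := rfl

set_option synthInstance.maxHeartbeats 60000 in
theorem dualOp_pow (A : X →L[ℂ] X) (k : ℕ) :
    dualOp (A ^ k) = (dualOp A ^ k : StrongDual ℂ X →L[ℂ] StrongDual ℂ X) := by
  induction k with
  | zero => rfl
  | succ k ih => rw [pow_succ', dualOp_mul, ih, pow_succ]

theorem dualOp_sub_smul_one (T : X →L[ℂ] X) (l : ℂ) :
    dualOp (T - l • 1) = (dualOp T - l • 1 : StrongDual ℂ X →L[ℂ] StrongDual ℂ X) := by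
  unfold dualOp
  rw [map_sub, map_smul]
  rfl

theorem mem_ker_dualOp_iff (S : X →L[ℂ] X) (f : StrongDual ℂ X) :
    f ∈ LinearMap.ker (dualOp S : StrongDual ℂ X →ₗ[ℂ] StrongDual ℂ X) ↔
      ∀ y ∈ LinearMap.range (S : X →ₗ[ℂ] X), f y = 0 := by
  simp [dualOp_apply, ContinuousLinearMap.ext_iff]

end

theorem gram_square_invertible_iff_browder_general
    {X : Type*} [NormedAddCommGroup X] [NormedSpace ℂ X]
    (T : X →L[ℂ] X) (l : ℂ) (p n m : ℕ) (hp : 0 < p)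
    (hclosed : IsClosed (LinearMap.range (((T - l • 1) ^ p : X →L[ℂ] X) : X →ₗ[ℂ] X) : Set X))
    (e : Module.Basis (Fin n) ℂ (LinearMap.ker (((T - l • 1) ^ p : X →L[ℂ] X) : X →ₗ[ℂ] X)))
    (estar : Module.Basis (Fin m) ℂ (LinearMap.ker (((dualOp T - l • 1) ^ p : StrongDual ℂ X →L[ℂ] StrongDual ℂ X) : StrongDual ℂ X →ₗ[ℂ] StrongDual ℂ X)))
    (G : Matrix (Fin m) (Fin n) ℂ)
    (hG : G = Matrix.of fun j i => (estar j : StrongDual ℂ X) (e i : X)) :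
    (m = n ∧ G.rank = n) ↔
      (m = n ∧
        LinearMap.ker (((T - l • 1) ^ p : X →L[ℂ] X) : X →ₗ[ℂ] X) = LinearMap.ker (((T - l • 1) ^ (p + 1) : X →L[ℂ] X) : X →ₗ[ℂ] X) ∧
        LinearMap.range (((T - l • 1) ^ p : X →L[ℂ] X) : X →ₗ[ℂ] X) = LinearMap.range (((T - l • 1) ^ (p + 1) : X →L[ℂ] X) : X →ₗ[ℂ] X)) := by
  have hK : ∀ f, f ∈ LinearMap.ker (((dualOp T - l • 1) ^ p : StrongDual ℂ X →L[ℂ] StrongDual ℂ X) :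
      StrongDual ℂ X →ₗ[ℂ] StrongDual ℂ X) ↔
      ∀ y ∈ LinearMap.range (((T - l • 1) ^ p : X →L[ℂ] X) : X →ₗ[ℂ] X), f y = 0 := by
    rw [← dualOp_sub_smul_one, ← dualOp_pow]
    exact mem_ker_dualOp_iff _
  have hGB : G = LinearMap.toMatrix₂ estar e ((topDualPairing ℂ X).domRestrict₁₂ _ _) := by
    ext j i
    rw [hG, LinearMap.toMatrix₂_apply]
    rfl
  have hrank := rank_toMatrix₂_topDualPairing_eq_card_iff_disjoint hclosed hK estar e
  rw [← hGB, Fintype.card_fin] at hrank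
  have hdisj := Module.End.disjoint_ker_pow_range_pow_iff ((T - l • 1 : X →L[ℂ] X) : X →ₗ[ℂ] X) hp
  simp only [← ContinuousLinearMap.toLinearMap_pow] at hdisj
  constructor
  · rintro ⟨rfl, hGrank⟩
    have hcodisj := codisjoint_of_rank_toMatrix₂_topDualPairing_eq_card hclosed hK estar e
      (by rw [← hGB, Fintype.card_fin, hGrank])
    rw [ContinuousLinearMap.toLinearMap_pow] at hcodisj
    refine ⟨rfl, hdisj.1 (hrank.1 hGrank), ?_⟩
    simpa only [← ContinuousLinearMap.toLinearMap_pow] using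
      Module.End.range_pow_eq_range_pow_succ_of_codisjoint _ hp hcodisj
  · rintro ⟨rfl, hker, -⟩
    exact ⟨rfl, hrank.2 (hdisj.2 hker)⟩

/-- Suppose `(T - λI)^p` has closed range and
`0 < dim ker (T - λI)^p = n ≤ m = dim ker (T* - λI)^p < ∞`.  Then the `m × n` Gram matrix
`G` (built from bases of the two generalized eigenspaces) is a square invertible matrix
(i.e. `m = n` and `G` has rank `n`) iff `T - λI` is a Browder operator with ascent at most
`p`, i.e. in addition `n = m`, `ker (T - λI)^p = ker (T - λI)^(p+1)` and
`range (T - λI)^p = range (T - λI)^(p+1)`. -/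
theorem gram_square_invertible_iff_browder
    {X : Type*} [NormedAddCommGroup X] [NormedSpace ℂ X] [CompleteSpace X]
    (T : X →L[ℂ] X) (l : ℂ) (p n m : ℕ) (hp : 0 < p) (hn : 0 < n) (hnm : n ≤ m)
    (hclosed : IsClosed (LinearMap.range (((T - l • 1) ^ p : X →L[ℂ] X) : X →ₗ[ℂ] X) : Set X))
    (e : Module.Basis (Fin n) ℂ (LinearMap.ker (((T - l • 1) ^ p : X →L[ℂ] X) : X →ₗ[ℂ] X)))
    (estar : Module.Basis (Fin m) ℂ (LinearMap.ker (((dualOp T - l • 1) ^ p : StrongDual ℂ X →L[ℂ] StrongDual ℂ X) : StrongDual ℂ X →ₗ[ℂ] StrongDual ℂ X)))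
    (G : Matrix (Fin m) (Fin n) ℂ)
    (hG : G = Matrix.of fun j i => (estar j : StrongDual ℂ X) (e i : X)) :
    (m = n ∧ G.rank = n) ↔
      (m = n ∧
        LinearMap.ker (((T - l • 1) ^ p : X →L[ℂ] X) : X →ₗ[ℂ] X) = LinearMap.ker (((T - l • 1) ^ (p + 1) : X →L[ℂ] X) : X →ₗ[ℂ] X) ∧
        LinearMap.range (((T - l • 1) ^ p : X →L[ℂ] X) : X →ₗ[ℂ] X) = LinearMap.range (((T - l • 1) ^ (p + 1) : X →L[ℂ] X) : X →ₗ[ℂ] X)) :=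
  gram_square_invertible_iff_browder_general T l p n m hp hclosed e estar G hG
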